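/- (Theorem: integration error of the central quadrature.) Let D ⊆ ℝ^m be a measurable set of finite Lebesgue measure vol(D), let L ∈ ℝ^{m×m}, let ε > 0, and let x̂₁,…,x̂_M ∈ D satisfy sup_{x ∈ D} min_{j=1,…,M} ‖L(x − x̂_j)‖₂ ≤ ε. For any f ∈ 𝓛(D, L), let f̄ be the central approximation built from the data (x̂_j, f(x̂_j)). Then |∫_D f̄(x) dx − ∫_D f(x) dx| ≤ ε · vol(D). Moreover, for any other f̃ ∈ 𝓛(D, L) with f̃(x̂_j) = f(x̂_j) for all j, |∫_D f̃(x) dx − ∫_D f(x) dx| ≤ 2ε · vol(D). -/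

import Mathlib

open Matrix

/-- The matrix-vector product as a map on Euclidean space,
so that `‖mulVecE L v‖` is the Euclidean 2-norm of `L v`. -/
noncomputable def mulVecE {m : ℕ} (L : Matrix (Fin m) (Fin m) ℝ)
    (v : EuclideanSpace ℝ (Fin m)) : EuclideanSpace ℝ (Fin m) :=
  Matrix.toEuclideanCLM (𝕜 := ℝ) L v

/-- The Lipschitz-matrix class `𝓛(D, L)`. -/
def MemLip {m : ℕ} (D : Set (EuclideanSpace ℝ (Fin m))) (L : Matrix (Fin m) (Fin m) ℝ)
    (f : EuclideanSpace ℝ (Fin m) → ℝ) : Prop :=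
  ∀ x₁ ∈ D, ∀ x₂ ∈ D, |f x₁ - f x₂| ≤ ‖mulVecE L (x₁ - x₂)‖

/-- The lower envelope `f₋(x) = max_j (y_j - ‖L(x - x̂_j)‖₂)` determined by data `(x̂_j, y_j)`. -/
noncomputable def lowerEnv {m M : ℕ} (L : Matrix (Fin m) (Fin m) ℝ)
    (xh : Fin M → EuclideanSpace ℝ (Fin m)) (y : Fin M → ℝ)
    (x : EuclideanSpace ℝ (Fin m)) : ℝ :=
  ⨆ j, (y j - ‖mulVecE L (x - xh j)‖)

/-- The upper envelope `f₊(x) = min_j (y_j + ‖L(x - x̂_j)‖₂)` determined by data `(x̂_j, y_j)`. -/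
noncomputable def upperEnv {m M : ℕ} (L : Matrix (Fin m) (Fin m) ℝ)
    (xh : Fin M → EuclideanSpace ℝ (Fin m)) (y : Fin M → ℝ)
    (x : EuclideanSpace ℝ (Fin m)) : ℝ :=
  ⨅ j, (y j + ‖mulVecE L (x - xh j)‖)

/-- The central approximation `f̄ = (f₋ + f₊)/2`. -/
noncomputable def centralApprox {m M : ℕ} (L : Matrix (Fin m) (Fin m) ℝ)
    (xh : Fin M → EuclideanSpace ℝ (Fin m)) (y : Fin M → ℝ)
    (x : EuclideanSpace ℝ (Fin m)) : ℝ :=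
  (lowerEnv L xh y x + upperEnv L xh y x) / 2
open MeasureTheory

/-! Every interpolant of the data in `𝓛(D, L)` lies, on `D`, between the lower and upper
envelopes, and a sample within `L`-distance `ε` of `x` squeezes the envelopes at `x` to width
`2ε`. So the central approximation, the midpoint of the envelopes, is within `ε` of `f`, and any
other interpolant within `2ε`; integrating these pointwise bounds over `D` gives the claim. -/

lemma abs_add_div_two_sub_le {a b t : ℝ} (ht : t ∈ Set.Icc a b) :
    |(a + b) / 2 - t| ≤ (b - a) / 2 :=
  abs_sub_le_iff.2 ⟨by linarith [ht.1], by linarith [ht.2]⟩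

section SetIntegral

variable {α : Type*} [MeasurableSpace α] {μ : Measure α} {s : Set α}

lemma integrableOn_of_abs_le {f : α → ℝ} {C : ℝ} (hs : MeasurableSet s) (hμs : μ s ≠ ⊤)
    (hf : AEStronglyMeasurable f (μ.restrict s)) (hfC : ∀ x ∈ s, |f x| ≤ C) :
    IntegrableOn f s μ :=
  Integrable.mono' (integrableOn_const hμs) hf (ae_restrict_of_forall_mem hs hfC)

lemma abs_setIntegral_sub_le {f g : α → ℝ} {c : ℝ} (hs : MeasurableSet s) (hμs : μ s ≠ ⊤)
    (hf : IntegrableOn f s μ) (hg : AEStronglyMeasurable g (μ.restrict s))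
    (hgf : ∀ x ∈ s, |g x - f x| ≤ c) :
    |(∫ x in s, g x ∂μ) - ∫ x in s, f x ∂μ| ≤ c * μ.real s := by
  have hgf_int : IntegrableOn (g - f) s μ :=
    integrableOn_of_abs_le hs hμs (hg.sub hf.aestronglyMeasurable) hgf
  have hg_int : IntegrableOn g s μ := by simpa using hgf_int.add hf
  rw [← integral_sub hg_int hf]
  simpa only [Real.norm_eq_abs] using norm_setIntegral_le_of_norm_le_const (f := fun x => g x - f x)
    hμs.lt_top (by simpa only [Real.norm_eq_abs] using hgf)

end SetIntegral

section Envelopes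

variable {m M : ℕ} {L : Matrix (Fin m) (Fin m) ℝ} {D : Set (EuclideanSpace ℝ (Fin m))}
  {xh : Fin M → EuclideanSpace ℝ (Fin m)} {y : Fin M → ℝ} {g : EuclideanSpace ℝ (Fin m) → ℝ}

lemma norm_mulVecE_sub_comm (L : Matrix (Fin m) (Fin m) ℝ) (a b : EuclideanSpace ℝ (Fin m)) :
    ‖mulVecE L (a - b)‖ = ‖mulVecE L (b - a)‖ := by
  rw [mulVecE, mulVecE, ← neg_sub b a, map_neg, norm_neg]

lemma continuous_norm_mulVecE_sub (L : Matrix (Fin m) (Fin m) ℝ) (a : EuclideanSpace ℝ (Fin m)) :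
    Continuous fun x => ‖mulVecE L (x - a)‖ :=
  ((Matrix.toEuclideanCLM (𝕜 := ℝ) L).continuous.comp (continuous_sub_right a)).norm

lemma MemLip.continuousOn (hg : MemLip D L g) : ContinuousOn g D := by
  refine (LipschitzOnWith.of_dist_le' (K := ‖Matrix.toEuclideanCLM (𝕜 := ℝ) L‖)
    fun a ha b hb => ?_).continuousOn
  rw [Real.dist_eq, dist_eq_norm]
  exact (hg a ha b hb).trans ((Matrix.toEuclideanCLM (𝕜 := ℝ) L).le_opNorm _)

lemma MemLip.abs_le_sum_add {ε : ℝ} (hg : MemLip D L g) (hxh : ∀ j, xh j ∈ D)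
    (hnear : ∀ x ∈ D, ∃ j, ‖mulVecE L (x - xh j)‖ ≤ ε) :
    ∀ x ∈ D, |g x| ≤ ∑ j, |g (xh j)| + ε := by
  intro x hx
  obtain ⟨j, hj⟩ := hnear x hx
  have hj_le_sum : |g (xh j)| ≤ ∑ j, |g (xh j)| :=
    Finset.single_le_sum (fun j _ => abs_nonneg (g (xh j))) (Finset.mem_univ j)
  linarith [abs_sub_abs_le_abs_sub (g x) (g (xh j)), hg x hx (xh j) (hxh j)]

lemma le_lowerEnv (L : Matrix (Fin m) (Fin m) ℝ) (xh : Fin M → EuclideanSpace ℝ (Fin m))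
    (y : Fin M → ℝ) (x : EuclideanSpace ℝ (Fin m)) (j : Fin M) :
    y j - ‖mulVecE L (x - xh j)‖ ≤ lowerEnv L xh y x :=
  le_ciSup (f := fun j => y j - ‖mulVecE L (x - xh j)‖) (Set.finite_range _).bddAbove j

lemma upperEnv_le (L : Matrix (Fin m) (Fin m) ℝ) (xh : Fin M → EuclideanSpace ℝ (Fin m))
    (y : Fin M → ℝ) (x : EuclideanSpace ℝ (Fin m)) (j : Fin M) :
    upperEnv L xh y x ≤ y j + ‖mulVecE L (x - xh j)‖ :=
  ciInf_le (Set.finite_range _).bddBelow j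

lemma upperEnv_sub_lowerEnv_le (L : Matrix (Fin m) (Fin m) ℝ)
    (xh : Fin M → EuclideanSpace ℝ (Fin m)) (y : Fin M → ℝ) (x : EuclideanSpace ℝ (Fin m))
    (j : Fin M) : upperEnv L xh y x - lowerEnv L xh y x ≤ 2 * ‖mulVecE L (x - xh j)‖ := by
  linarith [le_lowerEnv L xh y x j, upperEnv_le L xh y x j]

variable [NeZero M]

lemma MemLip.mem_Icc_envelopes (hg : MemLip D L g) (hxh : ∀ j, xh j ∈ D)
    (hy : ∀ j, g (xh j) = y j) {x : EuclideanSpace ℝ (Fin m)} (hx : x ∈ D) :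
    g x ∈ Set.Icc (lowerEnv L xh y x) (upperEnv L xh y x) := by
  constructor
  · refine ciSup_le fun j => ?_
    have := (abs_le.1 (hg (xh j) (hxh j) x hx)).2
    rw [hy, norm_mulVecE_sub_comm] at this
    linarith
  · refine le_ciInf fun j => ?_
    have := (abs_le.1 (hg x hx (xh j) (hxh j))).2
    rw [hy] at this
    linarith

lemma continuous_lowerEnv (L : Matrix (Fin m) (Fin m) ℝ) (xh : Fin M → EuclideanSpace ℝ (Fin m))
    (y : Fin M → ℝ) : Continuous (lowerEnv L xh y) := by
  have h : lowerEnv L xh y =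
      fun x => Finset.univ.sup' Finset.univ_nonempty fun j => y j - ‖mulVecE L (x - xh j)‖ := by
    funext x
    rw [Finset.sup'_univ_eq_ciSup]
    rfl
  rw [h]
  exact Continuous.finset_sup'_apply _ fun j _ =>
    continuous_const.sub (continuous_norm_mulVecE_sub L (xh j))

lemma continuous_upperEnv (L : Matrix (Fin m) (Fin m) ℝ) (xh : Fin M → EuclideanSpace ℝ (Fin m))
    (y : Fin M → ℝ) : Continuous (upperEnv L xh y) := by
  have h : upperEnv L xh y =
      fun x => Finset.univ.inf' Finset.univ_nonempty fun j => y j + ‖mulVecE L (x - xh j)‖ := by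
    funext x
    rw [Finset.inf'_univ_eq_ciInf]
    rfl
  rw [h]
  exact Continuous.finset_inf'_apply _ fun j _ =>
    continuous_const.add (continuous_norm_mulVecE_sub L (xh j))

lemma continuous_centralApprox (L : Matrix (Fin m) (Fin m) ℝ)
    (xh : Fin M → EuclideanSpace ℝ (Fin m)) (y : Fin M → ℝ) :
    Continuous (centralApprox L xh y) :=
  ((continuous_lowerEnv L xh y).add (continuous_upperEnv L xh y)).div_const 2

end Envelopes

theorem central_quadrature_error_general {m M : ℕ} (hM : 0 < M)
    (D : Set (EuclideanSpace ℝ (Fin m))) (hD : MeasurableSet D)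
    (hvol : volume D ≠ ⊤)
    (L : Matrix (Fin m) (Fin m) ℝ)
    (xh : Fin M → EuclideanSpace ℝ (Fin m)) (hx : ∀ j, xh j ∈ D)
    (ε : ℝ)
    (hfill : ∀ x ∈ D, (⨅ j, ‖mulVecE L (x - xh j)‖) ≤ ε)
    (f : EuclideanSpace ℝ (Fin m) → ℝ) (hf : MemLip D L f) :
    |(∫ x in D, centralApprox L xh (fun j => f (xh j)) x) - ∫ x in D, f x|
        ≤ ε * (volume D).toReal ∧
      ∀ ft : EuclideanSpace ℝ (Fin m) → ℝ, MemLip D L ft →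
        (∀ j, ft (xh j) = f (xh j)) →
        |(∫ x in D, ft x) - ∫ x in D, f x| ≤ 2 * ε * (volume D).toReal := by
  have : NeZero M := ⟨hM.ne'⟩
  have hnear : ∀ x ∈ D, ∃ j, ‖mulVecE L (x - xh j)‖ ≤ ε := fun x hxD => by
    obtain ⟨j, hj⟩ := exists_eq_ciInf_of_finite (f := fun j => ‖mulVecE L (x - xh j)‖)
    exact ⟨j, hj ▸ hfill x hxD⟩
  have hgap : ∀ x ∈ D, upperEnv L xh (fun j => f (xh j)) x
      - lowerEnv L xh (fun j => f (xh j)) x ≤ 2 * ε := fun x hxD => by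
    obtain ⟨j, hj⟩ := hnear x hxD
    linarith [upperEnv_sub_lowerEnv_le L xh (fun j => f (xh j)) x j]
  have hf_Icc := fun x (hxD : x ∈ D) => hf.mem_Icc_envelopes hx (fun _ => rfl) hxD
  have hf_int : IntegrableOn f D :=
    integrableOn_of_abs_le hD hvol (hf.continuousOn.aestronglyMeasurable hD)
      (hf.abs_le_sum_add hx hnear)
  refine ⟨?_, fun ft hft hft_data => ?_⟩
  · refine abs_setIntegral_sub_le hD hvol hf_int
      (continuous_centralApprox L xh _).aestronglyMeasurable fun x hxD => ?_
    exact (abs_add_div_two_sub_le (hf_Icc x hxD)).trans (by linarith [hgap x hxD])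
  · refine abs_setIntegral_sub_le hD hvol hf_int (hft.continuousOn.aestronglyMeasurable hD)
      fun x hxD => ?_
    have := Real.dist_le_of_mem_Icc (hft.mem_Icc_envelopes hx hft_data hxD) (hf_Icc x hxD)
    rw [Real.dist_eq] at this
    linarith [hgap x hxD]

/-- if the samples have `L`-fill distance at most `ε` on a measurable domain of
finite volume, then integrating the central approximation of `f ∈ 𝓛(D, L)` incurs error at most
`ε · vol(D)`, and integrating any other interpolant from `𝓛(D, L)` incurs error at most
`2ε · vol(D)`. -/
theorem central_quadrature_error {m M : ℕ} (hM : 0 < M)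
    (D : Set (EuclideanSpace ℝ (Fin m))) (hD : MeasurableSet D)
    (hvol : volume D ≠ ⊤)
    (L : Matrix (Fin m) (Fin m) ℝ)
    (xh : Fin M → EuclideanSpace ℝ (Fin m)) (hx : ∀ j, xh j ∈ D)
    (ε : ℝ) (hε : 0 < ε)
    (hfill : ∀ x ∈ D, (⨅ j, ‖mulVecE L (x - xh j)‖) ≤ ε)
    (f : EuclideanSpace ℝ (Fin m) → ℝ) (hf : MemLip D L f) :
    |(∫ x in D, centralApprox L xh (fun j => f (xh j)) x) - ∫ x in D, f x|
        ≤ ε * (volume D).toReal ∧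
      ∀ ft : EuclideanSpace ℝ (Fin m) → ℝ, MemLip D L ft →
        (∀ j, ft (xh j) = f (xh j)) →
        |(∫ x in D, ft x) - ∫ x in D, f x| ≤ 2 * ε * (volume D).toReal :=
  central_quadrature_error_general hM D hD hvol L xh hx ε hfill f hf
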